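/- Let q be a positive integer, Q = (q+1)/2, j a positive integer, c_1, …, c_j positive integers, and δ a nonnegative integer with δ ≥ j. For every feasible vector (x_1, …, x_j) (nonnegative integers with x_i ≤ c_i and ∑_{i=1}^j x_i ≤ δ) there exists a feasible vector (y_1, …, y_j) with y_i ≥ 1 for all i and ∑_{i=1}^j π(y_i) ≥ ∑_{i=1}^j π(x_i). In particular, there exists an optimal solution of DPF_j in which every component is at least 1. -/
import Mathlib


/-- Ceiling division of natural numbers: `cdiv a b = ⌈a / b⌉` (for `b > 0`). -/
def cdiv (a b : ℕ) : ℕ := (a + b - 1) / b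

/-- `⌈Q⌉` where `Q = (q+1)/2`. -/
def Qceil (q : ℕ) : ℕ := cdiv (q + 1) 2

/-- `⌊Q⌋` where `Q = (q+1)/2`. -/
def Qfloor (q : ℕ) : ℕ := (q + 1) / 2

/-- `π(Δ) = ⌈Δ/q⌉` if `Δ ≤ q`, and `π(Δ) = ⌈(Δ−q)/⌈Q⌉⌉ + 1` if `Δ > q`. -/
def piF (q Δ : ℕ) : ℕ := if Δ ≤ q then cdiv Δ q else cdiv (Δ - q) (Qceil q) + 1

lemma cdiv_succ_le (n b : ℕ) (hb : 0 < b) : cdiv (n + 1) b ≤ cdiv n b + 1 := by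
  unfold cdiv
  have h1 : n + 1 + b - 1 = n + b := by omega
  rw [h1, Nat.add_div_right _ hb]
  have : n / b ≤ (n + b - 1) / b := Nat.div_le_div_right (by omega)
  omega

lemma Qceil_pos (q : ℕ) (hq : 0 < q) : 0 < Qceil q := by
  unfold Qceil cdiv; omega

lemma piF_zero (q : ℕ) (hq : 0 < q) : piF q 0 = 0 := by
  unfold piF cdiv
  rw [if_pos (Nat.zero_le q)]
  exact Nat.div_eq_of_lt (by omega)

lemma piF_one (q : ℕ) (hq : 0 < q) : piF q 1 = 1 := by
  unfold piF cdiv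
  rw [if_pos (by omega : 1 ≤ q)]
  have : 1 + q - 1 = q := by omega
  rw [this, Nat.div_self hq]

lemma piF_pred (q : ℕ) (hq : 0 < q) (Δ : ℕ) (hΔ : 1 ≤ Δ) :
    piF q Δ ≤ piF q (Δ - 1) + 1 := by
  unfold piF
  rcases le_or_gt Δ q with h | h
  · rw [if_pos h, if_pos (by omega)]
    have := cdiv_succ_le (Δ - 1) q hq
    have e : Δ - 1 + 1 = Δ := by omega
    rw [e] at this; omega
  · rw [if_neg (by omega)]
    rcases eq_or_lt_of_le (Nat.succ_le_of_lt h) with h2 | h2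
    · -- Δ = q + 1
      rw [if_pos (by omega)]
      have e1 : Δ - q = 1 := by omega
      have e2 : Δ - 1 = q := by omega
      rw [e1, e2]
      have hQ := Qceil_pos q hq
      have : cdiv 1 (Qceil q) = 1 := by
        unfold cdiv
        have : 1 + Qceil q - 1 = Qceil q := by omega
        rw [this, Nat.div_self hQ]
      have hqq : cdiv q q = 1 := by
        unfold cdiv
        have e3 : q + q - 1 = (q - 1) + q := by omega
        rw [e3, Nat.add_div_right _ hq, Nat.div_eq_of_lt (by omega)]
      omega
    · rw [if_neg (by omega)]
      have hQ := Qceil_pos q hq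
      have := cdiv_succ_le (Δ - 1 - q) (Qceil q) hQ
      have e : Δ - 1 - q + 1 = Δ - q := by omega
      rw [e] at this; omega

lemma dpf_aux (q : ℕ) (hq : 0 < q) (j : ℕ) (c : ℕ → ℕ)
    (hc : ∀ i, 1 ≤ i → i ≤ j → 0 < c i) (δ : ℕ) (hδ : j ≤ δ) :
    ∀ z : ℕ, ∀ x : ℕ → ℕ,
      ((Finset.Icc 1 j).filter (fun i => x i = 0)).card ≤ z →
      (∀ i, 1 ≤ i → i ≤ j → x i ≤ c i) →
      (∑ i ∈ Finset.Icc 1 j, x i ≤ δ) →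
      ∃ y : ℕ → ℕ, (∀ i, 1 ≤ i → i ≤ j → 1 ≤ y i ∧ y i ≤ c i) ∧
        (∑ i ∈ Finset.Icc 1 j, y i ≤ δ) ∧
        (∑ i ∈ Finset.Icc 1 j, piF q (x i) ≤ ∑ i ∈ Finset.Icc 1 j, piF q (y i)) := by
  intro z
  induction z with
  | zero =>
    intro x hcard hx hsum
    refine ⟨x, fun i h1 h2 => ⟨?_, hx i h1 h2⟩, hsum, le_refl _⟩
    by_contra h
    have hx0 : x i = 0 := by omega
    have : i ∈ (Finset.Icc 1 j).filter (fun i => x i = 0) := by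
      simp [Finset.mem_Icc, h1, h2, hx0]
    have := Finset.card_pos.mpr ⟨i, this⟩
    omega
  | succ z ih =>
    intro x hcard hx hsum
    set Z := (Finset.Icc 1 j).filter (fun i => x i = 0) with hZ
    rcases Nat.eq_zero_or_pos Z.card with hz0 | hzpos
    · exact ih x (by simp only [← hZ]; omega) hx hsum
    · obtain ⟨i0, hi0⟩ := Finset.card_pos.mp hzpos
      have hi0m : i0 ∈ Finset.Icc 1 j := (Finset.mem_filter.mp hi0).1
      have hi0z : x i0 = 0 := (Finset.mem_filter.mp hi0).2
      obtain ⟨hi01, hi0j⟩ := Finset.mem_Icc.mp hi0m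
      rcases lt_or_eq_of_le hsum with hlt | heq
      · -- budget slack: just raise x i0 to 1
        set x' := Function.update x i0 1 with hx'
        have hsum' : ∑ i ∈ Finset.Icc 1 j, x' i ≤ δ := by
          rw [hx', Finset.sum_update_of_mem hi0m, ← Finset.erase_eq]
          have : ∑ i ∈ Finset.Icc 1 j, x i
              = x i0 + ∑ i ∈ (Finset.Icc 1 j).erase i0, x i :=
            (Finset.add_sum_erase _ _ hi0m).symm
          omega
        have hcard' : ((Finset.Icc 1 j).filter (fun i => x' i = 0)).card ≤ z := by
          have hsub : (Finset.Icc 1 j).filter (fun i => x' i = 0) ⊆ Z.erase i0 := by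
            intro i hi
            obtain ⟨him, hiz⟩ := Finset.mem_filter.mp hi
            have hne : i ≠ i0 := by
              intro h; rw [h, hx', Function.update_self] at hiz; omega
            rw [hx', Function.update_of_ne hne] at hiz
            exact Finset.mem_erase.mpr ⟨hne, Finset.mem_filter.mpr ⟨him, hiz⟩⟩
          have := Finset.card_le_card hsub
          have := Finset.card_erase_of_mem hi0
          omega
        have hx'c : ∀ i, 1 ≤ i → i ≤ j → x' i ≤ c i := by
          intro i h1 h2
          rcases eq_or_ne i i0 with rfl | hne
          · rw [hx', Function.update_self]; exact hc i h1 h2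
          · rw [hx', Function.update_of_ne hne]; exact hx i h1 h2
        obtain ⟨y, hy1, hy2, hy3⟩ := ih x' hcard' hx'c hsum'
        refine ⟨y, hy1, hy2, le_trans ?_ hy3⟩
        apply Finset.sum_le_sum
        intro i hi
        rcases eq_or_ne i i0 with rfl | hne
        · rw [hx', Function.update_self, hi0z, piF_zero q hq]; omega
        · rw [hx', Function.update_of_ne hne]
      · -- budget tight: some component is ≥ 2
        have hex : ∃ i1 ∈ Finset.Icc 1 j, 2 ≤ x i1 := by
          by_contra h
          push_neg at h
          have hb : ∑ i ∈ Finset.Icc 1 j, x i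
              = x i0 + ∑ i ∈ (Finset.Icc 1 j).erase i0, x i :=
            (Finset.add_sum_erase _ _ hi0m).symm
          have hle : ∑ i ∈ (Finset.Icc 1 j).erase i0, x i
              ≤ ∑ _i ∈ (Finset.Icc 1 j).erase i0, 1 := by
            apply Finset.sum_le_sum
            intro i hi
            have := h i (Finset.mem_of_mem_erase hi)
            omega
          simp only [Finset.sum_const, smul_eq_mul, mul_one] at hle
          have hce : ((Finset.Icc 1 j).erase i0).card = j - 1 := by
            rw [Finset.card_erase_of_mem hi0m, Nat.card_Icc]
            omega
          have hjδ : 1 ≤ j := hi01.trans hi0j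
          omega
        obtain ⟨i1, hi1m, hi1ge⟩ := hex
        have hne01 : i0 ≠ i1 := by
          intro h; rw [h] at hi0z; omega
        obtain ⟨hi11, hi1j⟩ := Finset.mem_Icc.mp hi1m
        set x' := Function.update (Function.update x i1 (x i1 - 1)) i0 1 with hx'
        have hx'i0 : x' i0 = 1 := by rw [hx', Function.update_self]
        have hx'i1 : x' i1 = x i1 - 1 := by
          rw [hx', Function.update_of_ne (Ne.symm hne01), Function.update_self]
        have hx'other : ∀ i, i ≠ i0 → i ≠ i1 → x' i = x i := by
          intro i h0 h1
          rw [hx', Function.update_of_ne h0, Function.update_of_ne h1]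
        have hi1m' : i1 ∈ (Finset.Icc 1 j).erase i0 :=
          Finset.mem_erase.mpr ⟨Ne.symm hne01, hi1m⟩
        -- sums decompose
        have hdx : ∀ f : ℕ → ℕ, ∑ i ∈ Finset.Icc 1 j, f i
            = f i0 + (f i1 + ∑ i ∈ ((Finset.Icc 1 j).erase i0).erase i1, f i) := by
          intro f
          rw [← Finset.add_sum_erase _ _ hi0m, ← Finset.add_sum_erase _ _ hi1m']
        have hrest : ∀ i ∈ ((Finset.Icc 1 j).erase i0).erase i1, x' i = x i := by
          intro i hi
          have h1 := (Finset.mem_erase.mp hi).1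
          have h0 := (Finset.mem_erase.mp (Finset.mem_of_mem_erase hi)).1
          exact hx'other i h0 h1
        have hrestsum : ∑ i ∈ ((Finset.Icc 1 j).erase i0).erase i1, x' i
            = ∑ i ∈ ((Finset.Icc 1 j).erase i0).erase i1, x i :=
          Finset.sum_congr rfl hrest
        have hsum' : ∑ i ∈ Finset.Icc 1 j, x' i ≤ δ := by
          have h1 := hdx (fun i => x' i)
          have h2 := hdx (fun i => x i)
          omega
        have hcard' : ((Finset.Icc 1 j).filter (fun i => x' i = 0)).card ≤ z := by
          have hsub : (Finset.Icc 1 j).filter (fun i => x' i = 0) ⊆ Z.erase i0 := by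
            intro i hi
            obtain ⟨him, hiz⟩ := Finset.mem_filter.mp hi
            have hne : i ≠ i0 := by
              intro h; rw [h, hx'i0] at hiz; omega
            have hne1 : i ≠ i1 := by
              intro h; rw [h, hx'i1] at hiz; omega
            rw [hx'other i hne hne1] at hiz
            exact Finset.mem_erase.mpr ⟨hne, Finset.mem_filter.mpr ⟨him, hiz⟩⟩
          have := Finset.card_le_card hsub
          have := Finset.card_erase_of_mem hi0
          omega
        have hx'c : ∀ i, 1 ≤ i → i ≤ j → x' i ≤ c i := by
          intro i h1 h2
          rcases eq_or_ne i i0 with rfl | hne0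
          · rw [hx'i0]; exact hc i h1 h2
          rcases eq_or_ne i i1 with rfl | hne1
          · rw [hx'i1]; have := hx i h1 h2; omega
          · rw [hx'other i hne0 hne1]; exact hx i h1 h2
        obtain ⟨y, hy1, hy2, hy3⟩ := ih x' hcard' hx'c hsum'
        refine ⟨y, hy1, hy2, le_trans ?_ hy3⟩
        have hpi_rest : ∑ i ∈ ((Finset.Icc 1 j).erase i0).erase i1, piF q (x' i)
            = ∑ i ∈ ((Finset.Icc 1 j).erase i0).erase i1, piF q (x i) :=
          Finset.sum_congr rfl (fun i hi => by rw [hrest i hi])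
        have h1 := hdx (fun i => piF q (x' i))
        have h2 := hdx (fun i => piF q (x i))
        rw [hx'i0, hx'i1] at h1
        rw [hi0z] at h2
        rw [piF_zero q hq] at h2
        rw [piF_one q hq] at h1
        have := piF_pred q hq (x i1) (by omega)
        omega

/-- if `δ ≥ j`, then any feasible vector of `DPF_j` can be replaced by a
feasible vector all of whose components are at least `1`, without decreasing the value. -/
theorem dpf_exists_positive_solution (q : ℕ) (hq : 0 < q) (j : ℕ) (hj : 0 < j)
    (c : ℕ → ℕ) (hc : ∀ i, 1 ≤ i → i ≤ j → 0 < c i) (δ : ℕ) (hδ : j ≤ δ)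
    (x : ℕ → ℕ) (hx : ∀ i, 1 ≤ i → i ≤ j → x i ≤ c i)
    (hsum : ∑ i ∈ Finset.Icc 1 j, x i ≤ δ) :
    ∃ y : ℕ → ℕ, (∀ i, 1 ≤ i → i ≤ j → 1 ≤ y i ∧ y i ≤ c i) ∧
      (∑ i ∈ Finset.Icc 1 j, y i ≤ δ) ∧
      (∑ i ∈ Finset.Icc 1 j, piF q (x i) ≤ ∑ i ∈ Finset.Icc 1 j, piF q (y i)) := by
  exact dpf_aux q hq j c hc δ hδ _ x le_rfl hx hsum
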